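/- arXiv:2305.02406 — 4 statements merged into one kernel-verified Lean document; each statement's English description precedes it below -/
import Mathlib

section
/- Let G be a graph on [n], 2 ≤ k ≤ n, and φ ∈ ℝ^{C(n,k)}. Then (k−1)·⟨L_k φ, φ⟩ = ∑_{u=1}^n ⟨L_{k−1} φ_u, φ_u⟩ − 2⟨D_k φ, φ⟩, where L_j is the Laplacian of the j-th token graph F_j(G), φ_u(τ) = φ(τ ∪ {u}) for u ∉ τ and 0 otherwise, and D_k is the diagonal matrix with (D_k)_{σ,σ} = |{e ∈ E(G) : e ⊆ σ}|. -/
open Finset Matrix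

/-- The `k`-th token graph of a graph `G` on `[n]` = `Fin n`: vertices are the `k`-subsets of
`[n]`, and `A, B` are adjacent iff `|A ∩ B| = k - 1` and `A △ B` is an edge of `G`. -/
def tokenGraph (n k : ℕ) (G : SimpleGraph (Fin n)) :
    SimpleGraph {s : Finset (Fin n) // s.card = k} :=
  SimpleGraph.fromRel (fun A B =>
    (A.1 ∩ B.1).card = k - 1 ∧ ∃ u v, G.Adj u v ∧ symmDiff A.1 B.1 = {u, v})

noncomputable instance (n k : ℕ) (G : SimpleGraph (Fin n)) :
    DecidableRel (tokenGraph n k G).Adj := Classical.decRel _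

/-- Laplacian matrix of the `k`-th token graph. -/
noncomputable def lapTok (n k : ℕ) (G : SimpleGraph (Fin n)) :
    Matrix {s : Finset (Fin n) // s.card = k} {s : Finset (Fin n) // s.card = k} ℝ :=
  SimpleGraph.lapMatrix ℝ (tokenGraph n k G)

/-- For `φ` on `k`-subsets of `[n]` and `u ∈ [n]`, the vector `φ_u` on `(k-1)`-subsets:
`φ_u(τ) = φ(τ ∪ {u})` if `u ∉ τ`, and `0` if `u ∈ τ`. -/
def phiU (n k : ℕ) (hk : 1 ≤ k) (φ : {s : Finset (Fin n) // s.card = k} → ℝ) (u : Fin n)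
    (τ : {s : Finset (Fin n) // s.card = k - 1}) : ℝ :=
  if h : u ∈ τ.1 then 0
  else φ ⟨insert u τ.1, by rw [Finset.card_insert_of_notMem h, τ.2]; omega⟩

open scoped Classical in
/-- The diagonal matrix `D_k` with `(D_k)_{σ,σ} = |E_σ|`, the number of edges of `G`
contained in `σ`. -/
noncomputable def Dmat (n k : ℕ) (G : SimpleGraph (Fin n)) :
    Matrix {s : Finset (Fin n) // s.card = k} {s : Finset (Fin n) // s.card = k} ℝ :=
  Matrix.diagonal fun σ => ((G.edgeFinset.filter (fun e => ∀ v ∈ e, v ∈ σ.1)).card : ℝ)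


/-!
Write `⟨L_j f, f⟩` as half a sum over ordered edges `(x, y)` of `G` and sets `S` avoiding `x` and
`y` of `(f (S + x) - f (S + y))²`, where `f` is extended by zero from `j`-sets to all sets. In
`⟨L_{k-1} φ_u, φ_u⟩` the terms with `u ∉ {x, y}` are the terms of `⟨L_k φ, φ⟩` with `u ∈ S`; as
`|S| = k - 1`, summing over `u` counts each of them `k - 1` times. The terms with `u = x` or `u = y`
are `φ (S + x + y)²`, and a `k`-set `σ` is of the form `S + x + y` for `2 |E_σ|` ordered edges
`(x, y)`, so these terms add up to `2 ⟨D_k φ, φ⟩`.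
-/

lemma Fintype.sum_subtype_eq_sum_of_ne {α M : Type*} [Fintype α] [AddCommMonoid M]
    {p : α → Prop} {_ : Fintype (Subtype p)} (f : α → M) (h : ∀ a, f a ≠ 0 → p a) :
    ∑ a : Subtype p, f a = ∑ a, f a := by
  classical
  rw [← sum_subtype (univ.filter p) (by simp) f, sum_filter_of_ne fun a _ => h a]

namespace Finset

variable {V : Type*} [DecidableEq V]

lemma card_sdiff_eq_one_of_card_inter {A B : Finset V} {j : ℕ} (hA : A.card = j)
    (hB : B.card = j) (hAB : A ≠ B) (h : (A ∩ B).card = j - 1) : (A \ B).card = 1 := by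
  have hsplit := card_sdiff_add_card_inter A B
  have hpos : (A \ B).card ≠ 0 := fun h0 =>
    hAB (eq_of_subset_of_card_le (sdiff_eq_empty_iff_subset.1 (card_eq_zero.1 h0)) (by omega))
  omega

lemma insert_inter_of_sdiff_eq_singleton {A B : Finset V} {x : V} (hx : A \ B = {x}) :
    insert x (A ∩ B) = A := by
  rw [insert_eq, ← hx, sdiff_union_inter]

lemma insert_inter_insert_of_notMem {x y : V} {S : Finset V} (hx : x ∉ S) (hy : y ∉ S)
    (hxy : x ≠ y) : insert x S ∩ insert y S = S := by
  rw [insert_inter_of_notMem (by simp [hxy, hx]), inter_insert_of_notMem hy, inter_self]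

lemma sum_powerset_ite_mem {M : Type*} [AddCommMonoid M] (s : Finset V) (g : Finset V → M) :
    ∑ u ∈ s, ∑ S ∈ s.powerset, (if u ∈ S then g S else 0) = ∑ S ∈ s.powerset, S.card • g S := by
  rw [sum_comm]
  refine sum_congr rfl fun S hS => ?_
  rw [sum_ite_mem, inter_eq_right.2 (mem_powerset.1 hS), sum_const]

variable [Fintype V]

lemma subset_compl_pair_iff {x y : V} {S : Finset V} :
    S ⊆ ({x, y}ᶜ : Finset V) ↔ x ∉ S ∧ y ∉ S := by
  rw [subset_compl_comm, insert_subset_iff, singleton_subset_iff, mem_compl, mem_compl]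

lemma sum_powerset_compl_union {M : Type*} [AddCommMonoid M] (t : Finset V)
    (g : Finset V → M) : ∑ S ∈ tᶜ.powerset, g (t ∪ S) = ∑ A with t ⊆ A, g A := by
  refine sum_nbij' (t ∪ ·) (· \ t) ?_ ?_ ?_ ?_ fun _ _ => rfl
  · intro S _
    simp
  · intro A _
    simp [subset_compl_iff_disjoint_right, sdiff_disjoint]
  · intro S hS
    exact union_sdiff_cancel_left (subset_compl_iff_disjoint_right.1 (mem_powerset.1 hS)).symm
  · intro A hA
    exact union_sdiff_of_subset (mem_filter.1 hA).2

end Finset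

namespace TokenGraph

variable {V : Type*}

def extendByZero {j : ℕ} (f : {s : Finset V // s.card = j} → ℝ) (A : Finset V) : ℝ :=
  if h : A.card = j then f ⟨A, h⟩ else 0

lemma extendByZero_val {j : ℕ} (f : {s : Finset V // s.card = j} → ℝ)
    (A : {s : Finset V // s.card = j}) : extendByZero f A.1 = f A :=
  dif_pos A.2

lemma extendByZero_of_card_ne {j : ℕ} (f : {s : Finset V // s.card = j} → ℝ) {A : Finset V}
    (h : A.card ≠ j) : extendByZero f A = 0 :=
  dif_neg h

variable [DecidableEq V]

def TokenMove (G : SimpleGraph V) (A B : Finset V) : Prop :=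
  ∃ x y, G.Adj x y ∧ A \ B = {x} ∧ B \ A = {y}

lemma TokenMove.symm {G : SimpleGraph V} {A B : Finset V} (h : TokenMove G A B) :
    TokenMove G B A :=
  let ⟨x, y, hxy, hx, hy⟩ := h
  ⟨y, x, hxy.symm, hy, hx⟩

lemma TokenMove.card_eq {G : SimpleGraph V} {A B : Finset V} (h : TokenMove G A B) :
    A.card = B.card := by
  obtain ⟨x, y, -, hx, hy⟩ := h
  rw [← card_sdiff_add_card_inter A B, ← card_sdiff_add_card_inter B A, hx, hy, inter_comm]
  rfl

lemma tokenMove_insert_insert {G : SimpleGraph V} {x y : V} {S : Finset V} (hxy : G.Adj x y)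
    (hx : x ∉ S) (hy : y ∉ S) : TokenMove G (insert x S) (insert y S) :=
  ⟨x, y, hxy, insert_sdiff_insert' hxy.ne hx, insert_sdiff_insert' hxy.ne.symm hy⟩

lemma tokenMove_of_symmDiff {G : SimpleGraph V} {A B : Finset V} {j : ℕ} (hA : A.card = j)
    (hB : B.card = j) (hAB : A ≠ B) (h : (A ∩ B).card = j - 1) {u v : V} (huv : G.Adj u v)
    (hd : symmDiff A B = {u, v}) : TokenMove G A B := by
  obtain ⟨a, ha⟩ := card_eq_one.1 (card_sdiff_eq_one_of_card_inter hA hB hAB h)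
  obtain ⟨b, hb⟩ := card_eq_one.1
    (card_sdiff_eq_one_of_card_inter hB hA hAB.symm (inter_comm A B ▸ h))
  have hab : ({a, b} : Finset V) = {u, v} := by
    rw [← hd, symmDiff_def, sup_eq_union, ha, hb]; rfl
  have hne : a ≠ b := by
    rintro rfl
    exact (mem_sdiff.1 (ha ▸ mem_singleton_self a)).2 (mem_sdiff.1 (hb ▸ mem_singleton_self a)).1
  refine ⟨a, b, ?_, ha, hb⟩
  have ha' : a ∈ ({u, v} : Finset V) := hab ▸ mem_insert_self a {b}
  have hb' : b ∈ ({u, v} : Finset V) := hab ▸ mem_insert_of_mem (mem_singleton_self b)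
  simp only [mem_insert, mem_singleton] at ha' hb'
  rcases ha' with rfl | rfl <;> rcases hb' with rfl | rfl
  exacts [absurd rfl hne, huv, huv.symm, absurd rfl hne]

def link (F : Finset V → ℝ) (u : V) (T : Finset V) : ℝ :=
  if u ∈ T then 0 else F (insert u T)

variable [Fintype V] (G : SimpleGraph V) [DecidableRel G.Adj]

def energy (F : Finset V → ℝ) : ℝ :=
  ∑ d : G.Dart, ∑ S ∈ ({d.fst, d.snd}ᶜ : Finset V).powerset,
    (F (insert d.fst S) - F (insert d.snd S)) ^ 2

lemma sum_tokenMove {M : Type*} [AddCommMonoid M] [DecidableRel (TokenMove G)]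
    (g : Finset V → Finset V → M) :
    ∑ A, ∑ B, (if TokenMove G A B then g A B else 0) =
      ∑ d : G.Dart, ∑ S ∈ ({d.fst, d.snd}ᶜ : Finset V).powerset,
        g (insert d.fst S) (insert d.snd S) := by
  rw [← Fintype.sum_prod_type', ← sum_filter, sum_sigma']
  symm
  refine sum_nbij (fun q => (insert q.1.fst q.2, insert q.1.snd q.2)) ?_ ?_ ?_ (fun _ _ => rfl)
  · rintro ⟨d, S⟩ hS
    simp only [mem_sigma, mem_univ, mem_powerset, subset_compl_pair_iff, true_and] at hS
    exact mem_filter.2 ⟨mem_univ _, tokenMove_insert_insert d.adj hS.1 hS.2⟩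
  · rintro ⟨d, S⟩ hS ⟨d', S'⟩ hS' h
    simp only [mem_coe, mem_sigma, mem_univ, mem_powerset, subset_compl_pair_iff, true_and]
      at hS hS'
    simp only [Prod.mk.injEq] at h
    have hfst := congrArg₂ (· \ ·) h.1 h.2
    have hsnd := congrArg₂ (· \ ·) h.2 h.1
    have hinter := congrArg₂ (· ∩ ·) h.1 h.2
    simp only [insert_sdiff_insert' d.adj.ne hS.1, insert_sdiff_insert' d'.adj.ne hS'.1,
      insert_sdiff_insert' d.adj.ne.symm hS.2, insert_sdiff_insert' d'.adj.ne.symm hS'.2,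
      singleton_inj, insert_inter_insert_of_notMem hS.1 hS.2 d.adj.ne,
      insert_inter_insert_of_notMem hS'.1 hS'.2 d'.adj.ne] at hfst hsnd hinter
    obtain rfl : d = d' := SimpleGraph.Dart.ext _ _ (Prod.ext hfst hsnd)
    rw [hinter]
  · rintro ⟨A, B⟩ hAB
    obtain ⟨x, y, hxy, hx, hy⟩ := (mem_filter.1 hAB).2
    have hxB : x ∉ B := (mem_sdiff.1 (hx ▸ mem_singleton_self x)).2
    have hyA : y ∉ A := (mem_sdiff.1 (hy ▸ mem_singleton_self y)).2
    refine ⟨⟨⟨(x, y), hxy⟩, A ∩ B⟩, ?_, ?_⟩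
    · simp only [mem_coe, mem_sigma, mem_univ, mem_powerset, subset_compl_pair_iff, mem_inter,
        true_and]
      exact ⟨fun h => hxB h.2, fun h => hyA h.1⟩
    · exact Prod.ext (insert_inter_of_sdiff_eq_singleton hx)
        (inter_comm A B ▸ insert_inter_of_sdiff_eq_singleton hy)

lemma sum_tokenMove_sq_eq_energy [DecidableRel (TokenMove G)] {j : ℕ}
    (f : {s : Finset V // s.card = j} → ℝ) :
    ∑ A : {s : Finset V // s.card = j}, ∑ B : {s : Finset V // s.card = j},
      (if TokenMove G A.1 B.1 then (f A - f B) ^ 2 else 0) = energy G (extendByZero f) := by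
  set F := extendByZero f
  have hsupp : ∀ A B, (if TokenMove G A B then (F A - F B) ^ 2 else 0) ≠ 0 →
      A.card = j ∧ B.card = j := by
    intro A B h
    obtain ⟨hmove, hne⟩ := ite_ne_right_iff.1 h
    by_contra hAB
    have hA : A.card ≠ j := fun hA => hAB ⟨hA, hmove.card_eq ▸ hA⟩
    simp [F, extendByZero_of_card_ne f hA, extendByZero_of_card_ne f (hmove.card_eq ▸ hA)] at hne
  calc _ = ∑ A : {s : Finset V // s.card = j}, ∑ B : {s : Finset V // s.card = j},
        (if TokenMove G A.1 B.1 then (F A - F B) ^ 2 else 0) := by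
          simp only [F, extendByZero_val]
    _ = ∑ A : {s : Finset V // s.card = j}, ∑ B,
        (if TokenMove G A.1 B then (F A - F B) ^ 2 else 0) :=
      sum_congr rfl fun A _ => by
        exact Fintype.sum_subtype_eq_sum_of_ne _ fun B h => (hsupp _ B h).2
    _ = ∑ A, ∑ B, (if TokenMove G A B then (F A - F B) ^ 2 else 0) := by
      refine Fintype.sum_subtype_eq_sum_of_ne
        (fun A => ∑ B, if TokenMove G A B then (F A - F B) ^ 2 else 0) fun A h => ?_
      obtain ⟨B, -, hB⟩ := exists_ne_zero_of_sum_ne_zero h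
      exact (hsupp A B hB).1
    _ = energy G F := sum_tokenMove G _

lemma sum_powerset_link_sq_of_mem (F : Finset V → ℝ) {u x y : V}
    (hu : u ∈ ({x, y}ᶜ : Finset V)) :
    ∑ S ∈ ({x, y}ᶜ : Finset V).powerset, (link F u (insert x S) - link F u (insert y S)) ^ 2 =
      ∑ S ∈ ({x, y}ᶜ : Finset V).powerset,
        if u ∈ S then (F (insert x S) - F (insert y S)) ^ 2 else 0 := by
  have ⟨hux, huy⟩ : u ≠ x ∧ u ≠ y := by simpa using hu
  rw [← insert_erase hu, sum_powerset_insert (notMem_erase u _),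
    sum_powerset_insert (notMem_erase u _)]
  have hfree : ∀ S ∈ (({x, y}ᶜ : Finset V).erase u).powerset, u ∉ S := fun S hS hmem =>
    notMem_erase u _ (mem_powerset.1 hS hmem)
  rw [add_comm]
  congr 1 <;> refine sum_congr rfl fun S hS => ?_
  · simp [link, hfree S hS]
  · simp [link, hfree S hS, hux, huy, insert_comm u]

lemma sum_link_sq (F : Finset V → ℝ) {x y : V} (hxy : x ≠ y) :
    ∑ u, ∑ S ∈ ({x, y}ᶜ : Finset V).powerset,
        (link F u (insert x S) - link F u (insert y S)) ^ 2 =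
      ∑ S ∈ ({x, y}ᶜ : Finset V).powerset,
        (S.card * (F (insert x S) - F (insert y S)) ^ 2 + 2 * F (insert x (insert y S)) ^ 2) := by
  rw [← sum_add_sum_compl ({x, y}ᶜ : Finset V), compl_compl, sum_pair hxy,
    sum_congr rfl fun u hu => sum_powerset_link_sq_of_mem F hu,
    sum_powerset_ite_mem, ← sum_add_distrib, ← sum_add_distrib]
  refine sum_congr rfl fun S hS => ?_
  obtain ⟨hx, hy⟩ := subset_compl_pair_iff.1 (mem_powerset.1 hS)
  simp only [nsmul_eq_mul, link, mem_insert, hx, hy, hxy, hxy.symm, or_false, or_self,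
    ↓reduceIte, zero_sub, sub_zero, even_two, Even.neg_pow, insert_comm y x, add_right_inj]
  ring

lemma sum_energy_link (F : Finset V → ℝ) :
    ∑ u, energy G (link F u) =
      ∑ d : G.Dart, ∑ S ∈ ({d.fst, d.snd}ᶜ : Finset V).powerset,
        S.card * (F (insert d.fst S) - F (insert d.snd S)) ^ 2 +
      2 * ∑ d : G.Dart, ∑ S ∈ ({d.fst, d.snd}ᶜ : Finset V).powerset,
        F (insert d.fst (insert d.snd S)) ^ 2 := by
  simp only [energy, mul_sum, ← sum_add_distrib]
  rw [sum_comm]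
  exact sum_congr rfl fun d _ => sum_link_sq F d.adj.ne

lemma sum_card_mul_sq_extendByZero {j : ℕ} (f : {s : Finset V // s.card = j} → ℝ) :
    ∑ d : G.Dart, ∑ S ∈ ({d.fst, d.snd}ᶜ : Finset V).powerset,
        S.card * (extendByZero f (insert d.fst S) - extendByZero f (insert d.snd S)) ^ 2 =
      ((j : ℝ) - 1) * energy G (extendByZero f) := by
  simp only [energy, mul_sum]
  refine sum_congr rfl fun d _ => sum_congr rfl fun S hS => ?_
  obtain ⟨hx, hy⟩ := subset_compl_pair_iff.1 (mem_powerset.1 hS)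
  by_cases hcard : S.card + 1 = j
  · rw [show (S.card : ℝ) = j - 1 by rw [← hcard]; push_cast; ring]
  · rw [extendByZero_of_card_ne f (by rwa [card_insert_of_notMem hx]),
      extendByZero_of_card_ne f (by rwa [card_insert_of_notMem hy])]
    simp

lemma sum_dart_powerset_insert_insert {M : Type*} [AddCommMonoid M] (g : Finset V → M) :
    ∑ d : G.Dart, ∑ S ∈ ({d.fst, d.snd}ᶜ : Finset V).powerset, g (insert d.fst (insert d.snd S)) =
      ∑ A, #{d : G.Dart | d.fst ∈ A ∧ d.snd ∈ A} • g A := by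
  have hpair : ∀ (x y : V) (S : Finset V), insert x (insert y S) = {x, y} ∪ S := fun x y S => by
    rw [insert_union, ← insert_eq]
  calc _ = ∑ d : G.Dart, ∑ A with d.fst ∈ A ∧ d.snd ∈ A, g A := by
        refine sum_congr rfl fun d _ => ?_
        simp only [hpair, sum_powerset_compl_union, insert_subset_iff, singleton_subset_iff]
    _ = ∑ A, ∑ d : G.Dart with d.fst ∈ A ∧ d.snd ∈ A, g A :=
        sum_comm' fun d A => by simp
    _ = _ := by simp only [sum_const]

lemma card_dart_mem_eq [Fintype G.edgeSet] (A : Finset V) :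
    #{d : G.Dart | d.fst ∈ A ∧ d.snd ∈ A} = 2 * #{e ∈ G.edgeFinset | ∀ v ∈ e, v ∈ A} := by
  have hmem : ∀ d : G.Dart, (∀ v ∈ d.edge, v ∈ A) ↔ d.fst ∈ A ∧ d.snd ∈ A := fun d => by
    simp [SimpleGraph.Dart.edge, Sym2.mem_iff]
  rw [card_eq_sum_card_fiberwise (f := SimpleGraph.Dart.edge)
    (t := {e ∈ G.edgeFinset | ∀ v ∈ e, v ∈ A}), mul_comm, ← smul_eq_mul, ← sum_const]
  · refine sum_congr rfl fun e he => ?_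
    obtain ⟨he, heA⟩ := mem_filter.1 he
    rw [← G.dart_edge_fiber_card e (G.mem_edgeFinset.1 he)]
    congr 1
    ext d
    simp only [mem_filter, mem_univ, true_and, and_iff_right_iff_imp, ← hmem]
    rintro rfl
    exact heA
  · intro d hd
    simp only [coe_filter, mem_univ, true_and, Set.mem_ofPred_eq, ← hmem] at hd
    exact mem_filter.2 ⟨G.mem_edgeFinset.2 d.edge_mem, hd⟩

end TokenGraph

open TokenGraph

lemma tokenGraph_adj_iff {n j : ℕ} (G : SimpleGraph (Fin n))
    (A B : {s : Finset (Fin n) // s.card = j}) :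
    (tokenGraph n j G).Adj A B ↔ TokenMove G A.1 B.1 := by
  rw [tokenGraph, SimpleGraph.fromRel_adj]
  constructor
  · rintro ⟨hne, ⟨h, u, v, huv, hd⟩ | ⟨h, u, v, huv, hd⟩⟩
    · exact tokenMove_of_symmDiff A.2 B.2 (Subtype.coe_ne_coe.2 hne) h huv hd
    · exact (tokenMove_of_symmDiff B.2 A.2 (Subtype.coe_ne_coe.2 hne.symm) h huv hd).symm
  · rintro ⟨x, y, hxy, hx, hy⟩
    have hne : A ≠ B := by
      rintro rfl
      simp at hx
    refine ⟨hne, Or.inl ⟨?_, x, y, hxy, ?_⟩⟩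
    · have := card_sdiff_add_card_inter A.1 B.1
      rw [hx, card_singleton, A.2] at this
      omega
    · rw [symmDiff_def, sup_eq_union, hx, hy]; rfl

lemma two_mul_lapTok_dotProduct {n j : ℕ} (G : SimpleGraph (Fin n)) [DecidableRel G.Adj]
    (f : {s : Finset (Fin n) // s.card = j} → ℝ) :
    2 * (lapTok n j G *ᵥ f ⬝ᵥ f) = energy G (extendByZero f) := by
  classical
  rw [lapTok, dotProduct_comm, ← toLinearMap₂'_apply', SimpleGraph.lapMatrix_toLinearMap₂',
    mul_div_cancel₀ _ two_ne_zero, ← sum_tokenMove_sq_eq_energy]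
  simp only [tokenGraph_adj_iff]

lemma extendByZero_phiU {n k : ℕ} (hk : 1 ≤ k) (φ : {s : Finset (Fin n) // s.card = k} → ℝ)
    (u : Fin n) : extendByZero (phiU n k hk φ u) = link (extendByZero φ) u := by
  ext T
  by_cases huT : u ∈ T
  · simp [extendByZero, phiU, link, huT]
  have hcard : (insert u T).card = k ↔ T.card = k - 1 := by
    rw [card_insert_of_notMem huT]
    omega
  by_cases hT : T.card = k - 1
  · rw [link, if_neg huT, extendByZero, dif_pos hT, phiU, dif_neg huT, extendByZero,
      dif_pos (hcard.2 hT)]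
  · rw [link, if_neg huT, extendByZero_of_card_ne _ hT, extendByZero_of_card_ne _ (mt hcard.1 hT)]

lemma two_mul_Dmat_dotProduct {n k : ℕ} (G : SimpleGraph (Fin n)) [DecidableRel G.Adj]
    (φ : {s : Finset (Fin n) // s.card = k} → ℝ) :
    2 * (Dmat n k G *ᵥ φ ⬝ᵥ φ) =
      ∑ d : G.Dart, ∑ S ∈ ({d.fst, d.snd}ᶜ : Finset (Fin n)).powerset,
        extendByZero φ (insert d.fst (insert d.snd S)) ^ 2 := by
  rw [sum_dart_powerset_insert_insert G (extendByZero φ · ^ 2),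
    ← Fintype.sum_subtype_eq_sum_of_ne (p := (·.card = k))]
  · simp only [Dmat, dotProduct, mulVec_diagonal, mul_sum, card_dart_mem_eq, extendByZero_val,
      nsmul_eq_mul, Nat.cast_mul, Nat.cast_ofNat]
    refine sum_congr rfl fun A _ => ?_
    -- the two edge counts differ in their decidability instances
    convert (fun c => by ring : ∀ c : ℝ, 2 * (c * φ A * φ A) = 2 * c * φ A ^ 2) _ using 3
    congr!
  · intro A hA
    by_contra hAk
    simp [extendByZero_of_card_ne φ hAk] at hA

/-- `(k-1)⟨L_k φ, φ⟩ = ∑_u ⟨L_{k-1} φ_u, φ_u⟩ - 2⟨D_k φ, φ⟩`. -/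
theorem garland_identity (n k : ℕ) (G : SimpleGraph (Fin n)) (hk : 2 ≤ k)
    (φ : {s : Finset (Fin n) // s.card = k} → ℝ) :
    ((k : ℝ) - 1) * (lapTok n k G *ᵥ φ ⬝ᵥ φ) =
      (∑ u : Fin n, (lapTok n (k - 1) G *ᵥ phiU n k (by omega) φ u ⬝ᵥ phiU n k (by omega) φ u)) -
        2 * (Dmat n k G *ᵥ φ ⬝ᵥ φ) := by
  classical
  have hk1 : 1 ≤ k := by omega
  have hlink : ∀ u, 2 * (lapTok n (k - 1) G *ᵥ phiU n k hk1 φ u ⬝ᵥ phiU n k hk1 φ u) =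
      energy G (link (extendByZero φ) u) := fun u => by
    rw [two_mul_lapTok_dotProduct, extendByZero_phiU]
  have hsum := sum_energy_link G (extendByZero φ)
  rw [← sum_congr rfl fun u _ => hlink u, ← mul_sum, sum_card_mul_sq_extendByZero G,
    ← two_mul_Dmat_dotProduct, ← two_mul_lapTok_dotProduct G φ] at hsum
  linarith
end

section
/- Let G be a graph on [n], 2 ≤ k ≤ ⌊n/2⌋. If λ is an eigenvalue of L_k(G) admitting an eigenvector φ with B_{n,k,k−1}ᵀ φ = 0, then λ ≥ (k/(k−1))·μ − k, where μ is the minimum of ⟨L_{k−1}(G)ψ, ψ⟩/‖ψ‖² over nonzero ψ with B_{n,k−1,k−2}ᵀ ψ = 0. -/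
open Finset Matrix

/-- The inclusion matrix `B_{n,k,l}` of `l`-subsets into `k`-subsets of `[n]`. -/
def inclMatrix (n k l : ℕ) :
    Matrix {s : Finset (Fin n) // s.card = k} {s : Finset (Fin n) // s.card = l} ℝ :=
  fun σ η => if η.1 ⊆ σ.1 then 1 else 0

/-! For a vertex `v`, the vector `ψ_v = link φ v`, `ψ_v(A) = φ(A ∪ {v})` (zero if `v ∈ A`), lies
in the kernel of `Bᵀ`, and since every `k`-set has `k` elements, `∑ᵥ ‖ψ_v‖² = k ‖φ‖²`.
In `∑ᵥ ⟨L_{k-1} ψ_v, ψ_v⟩`, an edge `A ~ B` of `F_{k-1}(G)` contributes, for `v ∉ A ∪ B`, the term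
of the edge `A + v ~ B + v` of `F_k(G)`, and, for the two `v ∈ A △ B`, the term `φ(A ∪ B)²`.
Each edge of `F_k(G)` arises from `k - 1` choices of `v`, and each `k`-set is `A ∪ B` for at most
`k (k - 1)` ordered pairs, so `μ k ‖φ‖² ≤ ∑ᵥ ⟨L_{k-1} ψ_v, ψ_v⟩ ≤ (k - 1) λ ‖φ‖² + k (k - 1) ‖φ‖²`. -/

abbrev KSet (α : Type*) (k : ℕ) := {s : Finset α // s.card = k}

section Link

variable {α : Type*} {k : ℕ} {M : Type*} [Zero M]

def extendByZero (φ : KSet α k → M) (s : Finset α) : M :=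
  if h : s.card = k then φ ⟨s, h⟩ else 0

@[simp]
lemma extendByZero_val (φ : KSet α k → M) (S : KSet α k) : extendByZero φ S.1 = φ S :=
  dif_pos S.2

variable [DecidableEq α]

def link (φ : KSet α (k + 1) → M) (v : α) (A : KSet α k) : M :=
  if v ∉ A.1 then extendByZero φ (insert v A.1) else 0

@[simp]
lemma link_zero (v : α) : link (0 : KSet α (k + 1) → M) v = 0 := by
  ext A
  simp [link, extendByZero]

lemma link_sub_link_sq (φ : KSet α (k + 1) → ℝ) {A B : KSet α k}
    (hAB : ∀ a ∈ A.1 \ B.1, insert a B.1 = A.1 ∪ B.1)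
    (hBA : ∀ b ∈ B.1 \ A.1, insert b A.1 = A.1 ∪ B.1) (v : α) :
    (link φ v A - link φ v B) ^ 2 =
      (if v ∉ A.1 ∧ v ∉ B.1 then
        (extendByZero φ (insert v A.1) - extendByZero φ (insert v B.1)) ^ 2 else 0) +
      if v ∈ symmDiff A.1 B.1 then extendByZero φ (A.1 ∪ B.1) ^ 2 else 0 := by
  by_cases hA : v ∈ A.1 <;> by_cases hB : v ∈ B.1
  · simp [link, hA, hB, mem_symmDiff]
  · simp [link, hA, hB, mem_symmDiff, hAB v (mem_sdiff.2 ⟨hA, hB⟩)]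
  · simp [link, hA, hB, mem_symmDiff, hBA v (mem_sdiff.2 ⟨hB, hA⟩)]
  · simp [link, hA, hB, mem_symmDiff]

end Link

section FinsetCard

variable {α : Type*} [DecidableEq α]

lemma symmDiff_insert_insert {s t : Finset α} {v : α} (hs : v ∉ s) (ht : v ∉ t) :
    symmDiff (insert v s) (insert v t) = symmDiff s t := by
  ext x
  by_cases hx : x = v <;> simp [mem_symmDiff, hx, hs, ht]

lemma card_sdiff_eq_one_of_card_symmDiff {s t : Finset α} (hst : s.card = t.card)
    (h : (symmDiff s t).card = 2) : (s \ t).card = 1 := by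
  rw [Finset.symmDiff_def, card_union_of_disjoint disjoint_sdiff_sdiff] at h
  have hs := card_sdiff_add_card_inter s t
  have ht := card_sdiff_add_card_inter t s
  rw [inter_comm] at ht
  omega

lemma card_filter_union_eq_le {k : ℕ} {U : Finset α} (hU : U.card = k + 1)
    {s : Finset (KSet α k × KSet α k)} (hs : ∀ p ∈ s, p.1 ≠ p.2) :
    (s.filter fun p => p.1.1 ∪ p.2.1 = U).card ≤ (k + 1) * k := by
  calc (s.filter fun p => p.1.1 ∪ p.2.1 = U).card
      ≤ (powersetCard k U).offDiag.card := by
        refine card_le_card_of_injOn (fun p => (p.1.1, p.2.1)) (fun p hp => ?_) ?_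
        · obtain ⟨hps, hpU⟩ := mem_filter.1 hp
          rw [mem_coe, mem_offDiag, mem_powersetCard, mem_powersetCard, ← hpU]
          exact ⟨⟨subset_union_left, p.1.2⟩, ⟨subset_union_right, p.2.2⟩,
            fun h => hs p hps (Subtype.ext h)⟩
        · intro p _ q _ hpq
          simp only [Prod.mk.injEq] at hpq
          exact Prod.ext (Subtype.ext hpq.1) (Subtype.ext hpq.2)
    _ = (k + 1) * k := by
        rw [offDiag_card, card_powersetCard, hU, Nat.choose_succ_self_right,
          ← Nat.mul_sub_one, Nat.add_sub_cancel]

end FinsetCard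

section KSetSum

variable {α : Type*} [Fintype α] [DecidableEq α] {k : ℕ}

lemma sum_kset_insert {M : Type*} [AddCommMonoid M] (v : α) (f : Finset α → M) :
    ∑ A : KSet α k, (if v ∉ A.1 then f (insert v A.1) else 0) =
      ∑ S : KSet α (k + 1), if v ∈ S.1 then f S.1 else 0 := by
  rw [← sum_filter, ← sum_filter]
  refine sum_bij' (fun A hA => ⟨insert v A.1, ?_⟩) (fun S hS => ⟨S.1.erase v, ?_⟩)
    ?_ ?_ ?_ ?_ ?_
  · rw [card_insert_of_notMem (mem_filter.1 hA).2, A.2]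
  · rw [card_erase_of_mem (mem_filter.1 hS).2, S.2, Nat.add_sub_cancel]
  · intro A _
    simp
  · intro S _
    simp
  · intro A hA
    exact Subtype.ext (erase_insert (mem_filter.1 hA).2)
  · intro S hS
    exact Subtype.ext (insert_erase (mem_filter.1 hS).2)
  · intro A _
    rfl

lemma sum_sum_kset_insert {M : Type*} [AddCommMonoid M] (v : α)
    (f : Finset α → Finset α → M) :
    ∑ A : KSet α k, ∑ B : KSet α k,
        (if v ∉ A.1 ∧ v ∉ B.1 then f (insert v A.1) (insert v B.1) else 0) =
      ∑ S : KSet α (k + 1), ∑ T : KSet α (k + 1),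
        if v ∈ S.1 ∧ v ∈ T.1 then f S.1 T.1 else 0 := by
  simp only [ite_and, sum_ite_irrel, sum_const_zero]
  rw [sum_kset_insert v fun s => ∑ B : KSet α k, if v ∉ B.1 then f s (insert v B.1) else 0]
  simp only [sum_kset_insert]

lemma sum_link_dotProduct_self (φ : KSet α (k + 1) → ℝ) :
    ∑ v, link φ v ⬝ᵥ link φ v = (k + 1) * (φ ⬝ᵥ φ) := by
  have hv (v : α) :
      link φ v ⬝ᵥ link φ v = ∑ S : KSet α (k + 1), if v ∈ S.1 then φ S * φ S else 0 := by
    rw [dotProduct]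
    convert sum_kset_insert v fun s => extendByZero φ s * extendByZero φ s using 2 with A
    · by_cases hA : v ∈ A.1 <;> simp [link, hA]
    · simp
  simp_rw [hv]
  rw [sum_comm, dotProduct, mul_sum]
  refine sum_congr rfl fun S _ => ?_
  simp [S.2]

end KSetSum

namespace SimpleGraph

variable {V : Type*} [Fintype V] (H : SimpleGraph V) [DecidableRel H.Adj]
  {M : Type*} [AddCommMonoid M]

def adjSum (f : V → V → M) : M :=
  ∑ i, ∑ j, if H.Adj i j then f i j else 0

variable {H}

lemma adjSum_congr {f g : V → V → M} (h : ∀ i j, H.Adj i j → f i j = g i j) :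
    H.adjSum f = H.adjSum g :=
  sum_congr rfl fun i _ => sum_congr rfl fun j _ => by split_ifs with hij <;> simp [h i j, hij]

lemma adjSum_add (f g : V → V → M) :
    H.adjSum (fun i j => f i j + g i j) = H.adjSum f + H.adjSum g := by
  simp only [adjSum, ← sum_add_distrib, ← ite_add_zero]

lemma sum_adjSum {ι : Type*} (s : Finset ι) (f : ι → V → V → M) :
    ∑ v ∈ s, H.adjSum (f v) = H.adjSum fun i j => ∑ v ∈ s, f v i j := by
  simp only [adjSum]
  rw [sum_comm]
  refine sum_congr rfl fun i _ => ?_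
  rw [sum_comm]
  exact sum_congr rfl fun j _ => by split_ifs <;> simp

lemma adjSum_mul_left (c : ℝ) (f : V → V → ℝ) :
    H.adjSum (fun i j => c * f i j) = c * H.adjSum f := by
  simp only [adjSum, mul_sum, mul_ite, mul_zero]

lemma lapMatrix_mulVec_dotProduct_self [DecidableEq V] (x : V → ℝ) :
    (H.lapMatrix ℝ *ᵥ x) ⬝ᵥ x = H.adjSum (fun i j => (x i - x j) ^ 2) / 2 := by
  rw [dotProduct_comm, ← toLinearMap₂'_apply', lapMatrix_toLinearMap₂', adjSum]

lemma adjSum_union_le {α : Type*} [Fintype α] [DecidableEq α] {k : ℕ}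
    (H : SimpleGraph (KSet α k)) [DecidableRel H.Adj]
    (hH : ∀ A B, H.Adj A B → (A.1 ∪ B.1).card = k + 1) {f : Finset α → ℝ} (hf : ∀ s, 0 ≤ f s) :
    H.adjSum (fun A B => f (A.1 ∪ B.1)) ≤ (k + 1) * k * ∑ U : KSet α (k + 1), f U.1 := by
  set t := (univ : Finset (KSet α (k + 1))).map (Function.Embedding.subtype _)
  set s := (univ : Finset (KSet α k × KSet α k)).filter fun p => H.Adj p.1 p.2
  have hmaps : ∀ p ∈ s, p.1.1 ∪ p.2.1 ∈ t := fun p hp =>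
    mem_map.2 ⟨⟨_, hH _ _ (mem_filter.1 hp).2⟩, mem_univ _, rfl⟩
  calc H.adjSum (fun A B => f (A.1 ∪ B.1))
      = ∑ U ∈ t, ∑ p ∈ s with p.1.1 ∪ p.2.1 = U, f U := by
        rw [sum_fiberwise_of_maps_to' hmaps, sum_filter, adjSum]
        exact (Fintype.sum_prod_type' fun A B => if H.Adj A B then f (A.1 ∪ B.1) else 0).symm
    _ ≤ ∑ U ∈ t, ((k + 1) * k : ℕ) * f U := by
        refine sum_le_sum fun U hU => ?_
        obtain ⟨U, -, rfl⟩ := mem_map.1 hU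
        have hcard := card_filter_union_eq_le U.2 (s := s) fun p hp => (mem_filter.1 hp).2.ne
        rw [Function.Embedding.coe_subtype, sum_const, nsmul_eq_mul]
        exact mul_le_mul_of_nonneg_right (by exact_mod_cast hcard) (hf _)
    _ = (k + 1) * k * ∑ U : KSet α (k + 1), f U.1 := by
        rw [sum_map, mul_sum]
        push_cast
        rfl

end SimpleGraph

lemma sInf_mul_dotProduct_le {ι : Type*} [Fintype ι] {M : Matrix ι ι ℝ} (hM : M.PosSemidef)
    {P : (ι → ℝ) → Prop} {x : ι → ℝ} (hx : P x) :
    sInf {r : ℝ | ∃ ψ : ι → ℝ, ψ ≠ 0 ∧ P ψ ∧ r = (M *ᵥ ψ ⬝ᵥ ψ) / (ψ ⬝ᵥ ψ)} * (x ⬝ᵥ x) ≤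
      (M *ᵥ x) ⬝ᵥ x := by
  have hM' (y : ι → ℝ) : 0 ≤ (M *ᵥ y) ⬝ᵥ y := by
    simpa [dotProduct_comm] using hM.dotProduct_mulVec_nonneg y
  by_cases hx0 : x = 0
  · simp [hx0]
  have hpos : 0 < x ⬝ᵥ x := by simpa using dotProduct_star_self_pos_iff.2 hx0
  rw [← le_div_iff₀ hpos]
  refine csInf_le ⟨0, ?_⟩ ⟨x, hx0, hx, rfl⟩
  rintro r ⟨ψ, -, -, rfl⟩
  exact div_nonneg (hM' ψ) (dotProduct_star_self_nonneg ψ)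

lemma inclMatrix_transpose_mulVec_apply {n k l : ℕ} (x : KSet (Fin n) k → ℝ)
    (η : KSet (Fin n) l) :
    ((inclMatrix n k l)ᵀ *ᵥ x) η = ∑ A : KSet (Fin n) k, if η.1 ⊆ A.1 then x A else 0 := by
  simp [mulVec, dotProduct, inclMatrix, ite_mul]

lemma inclMatrix_transpose_mulVec_link {n k : ℕ} (φ : KSet (Fin n) (k + 2) → ℝ) (v : Fin n) :
    (inclMatrix n (k + 1) k)ᵀ *ᵥ link φ v = link ((inclMatrix n (k + 2) (k + 1))ᵀ *ᵥ φ) v := by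
  ext η
  rw [inclMatrix_transpose_mulVec_apply]
  by_cases hη : v ∈ η.1
  · refine (sum_eq_zero fun A _ => ?_).trans (by simp [link, hη])
    split_ifs with hA
    · simp [link, hA hη]
    · rfl
  · have hcard : (insert v η.1).card = k + 1 := by rw [card_insert_of_notMem hη, η.2]
    set f : Finset (Fin n) → ℝ := fun s => if insert v η.1 ⊆ s then extendByZero φ s else 0
    rw [link, if_pos hη, extendByZero, dif_pos hcard, inclMatrix_transpose_mulVec_apply]
    calc ∑ A : KSet (Fin n) (k + 1), (if η.1 ⊆ A.1 then link φ v A else 0)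
        = ∑ A : KSet (Fin n) (k + 1), if v ∉ A.1 then f (insert v A.1) else 0 :=
          sum_congr rfl fun A _ => by by_cases hA : v ∈ A.1 <;> simp [f, link, hA, hη]
      _ = ∑ S : KSet (Fin n) (k + 2), if v ∈ S.1 then f S.1 else 0 := sum_kset_insert v f
      _ = _ := sum_congr rfl fun S _ => by
          by_cases hS : v ∈ S.1 <;> simp [f, hS, insert_subset_iff]

section TokenGraph

variable {n k : ℕ} {G : SimpleGraph (Fin n)} {A B : KSet (Fin n) k}

lemma tokenGraph_adj_iff_s10 :
    (tokenGraph n k G).Adj A B ↔ ∃ u w, G.Adj u w ∧ symmDiff A.1 B.1 = {u, w} := by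
  rw [tokenGraph, SimpleGraph.fromRel_adj]
  refine ⟨fun h => ?_, fun ⟨u, w, huw, hAB⟩ => ?_⟩
  · rcases h with ⟨_, ⟨_, h⟩ | ⟨_, u, w, huw, hBA⟩⟩
    · exact h
    · exact ⟨u, w, huw, by rwa [symmDiff_comm]⟩
  · have hcard : (symmDiff A.1 B.1).card = 2 := by rw [hAB, card_pair huw.ne]
    have hne : A ≠ B := by rintro rfl; simp at hcard
    refine ⟨hne, Or.inl ⟨?_, u, w, huw, hAB⟩⟩
    have h1 := card_sdiff_eq_one_of_card_symmDiff (A.2.trans B.2.symm) hcard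
    have h2 := card_sdiff_add_card_inter A.1 B.1
    rw [A.2] at h2
    omega

lemma card_symmDiff_of_adj (h : (tokenGraph n k G).Adj A B) : (symmDiff A.1 B.1).card = 2 := by
  obtain ⟨u, w, huw, hAB⟩ := tokenGraph_adj_iff_s10.1 h
  rw [hAB, card_pair huw.ne]

lemma card_sdiff_of_adj (h : (tokenGraph n k G).Adj A B) : (A.1 \ B.1).card = 1 :=
  card_sdiff_eq_one_of_card_symmDiff (A.2.trans B.2.symm) (card_symmDiff_of_adj h)

lemma insert_eq_union_of_adj (h : (tokenGraph n k G).Adj A B) {a : Fin n}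
    (ha : a ∈ A.1 \ B.1) : insert a B.1 = A.1 ∪ B.1 := by
  obtain ⟨x, hx⟩ := card_eq_one.1 (card_sdiff_of_adj h)
  rw [hx, mem_singleton] at ha
  rw [← sdiff_union_self_eq_union, hx, ha, insert_eq]

lemma card_union_of_adj (h : (tokenGraph n k G).Adj A B) : (A.1 ∪ B.1).card = k + 1 := by
  obtain ⟨a, ha⟩ := card_eq_one.1 (card_sdiff_of_adj h)
  have haAB : a ∈ A.1 \ B.1 := by rw [ha]; exact mem_singleton_self a
  rw [← insert_eq_union_of_adj h haAB, card_insert_of_notMem (mem_sdiff.1 haAB).2, B.2]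

lemma card_inter_of_adj {S T : KSet (Fin n) (k + 1)} (h : (tokenGraph n (k + 1) G).Adj S T) :
    (S.1 ∩ T.1).card = k := by
  have := card_sdiff_add_card_inter S.1 T.1
  rw [card_sdiff_of_adj h, S.2] at this
  omega

lemma sum_link_sub_link_sq (φ : KSet (Fin n) (k + 1) → ℝ) (h : (tokenGraph n k G).Adj A B) :
    ∑ v, (link φ v A - link φ v B) ^ 2 =
      (∑ v, if v ∉ A.1 ∧ v ∉ B.1 then
        (extendByZero φ (insert v A.1) - extendByZero φ (insert v B.1)) ^ 2 else 0) +
      2 * extendByZero φ (A.1 ∪ B.1) ^ 2 := by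
  have hBA (b) (hb : b ∈ B.1 \ A.1) : insert b A.1 = A.1 ∪ B.1 :=
    (insert_eq_union_of_adj h.symm hb).trans (union_comm _ _)
  simp only [link_sub_link_sq φ (fun a => insert_eq_union_of_adj h) hBA, sum_add_distrib,
    sum_ite_mem, univ_inter, sum_const, card_symmDiff_of_adj h, nsmul_eq_mul, Nat.cast_ofNat]

lemma adjSum_sum_insert_sub_sq (φ : KSet (Fin n) (k + 1) → ℝ) :
    (tokenGraph n k G).adjSum (fun A B => ∑ v, if v ∉ A.1 ∧ v ∉ B.1 then
        (extendByZero φ (insert v A.1) - extendByZero φ (insert v B.1)) ^ 2 else 0) =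
      k * (tokenGraph n (k + 1) G).adjSum (fun S T => (φ S - φ T) ^ 2) := by
  classical
  set g : Finset (Fin n) → Finset (Fin n) → ℝ := fun s t =>
    if ∃ u w, G.Adj u w ∧ symmDiff s t = {u, w} then (extendByZero φ s - extendByZero φ t) ^ 2
    else 0
  have hlift (v : Fin n) :
      (tokenGraph n k G).adjSum (fun A B => if v ∉ A.1 ∧ v ∉ B.1 then
        (extendByZero φ (insert v A.1) - extendByZero φ (insert v B.1)) ^ 2 else 0) =
      ∑ A : KSet (Fin n) k, ∑ B : KSet (Fin n) k,
        if v ∉ A.1 ∧ v ∉ B.1 then g (insert v A.1) (insert v B.1) else 0 := by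
    refine sum_congr rfl fun A _ => sum_congr rfl fun B _ => ?_
    by_cases hAB : v ∉ A.1 ∧ v ∉ B.1
    · simp only [if_pos hAB, g, tokenGraph_adj_iff_s10, symmDiff_insert_insert hAB.1 hAB.2]
    · simp [hAB]
  have hcount (S T : KSet (Fin n) (k + 1)) :
      ∑ v, (if v ∈ S.1 ∧ v ∈ T.1 then g S.1 T.1 else 0) =
        if (tokenGraph n (k + 1) G).Adj S T then k * (φ S - φ T) ^ 2 else 0 := by
    simp only [← mem_inter, sum_ite_mem, univ_inter, sum_const, nsmul_eq_mul, g,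
      ← tokenGraph_adj_iff_s10, extendByZero_val]
    split_ifs with h
    · rw [card_inter_of_adj h]
    · simp
  rw [← SimpleGraph.sum_adjSum]
  simp only [hlift, sum_sum_kset_insert]
  rw [sum_comm, ← SimpleGraph.adjSum_mul_left]
  refine sum_congr rfl fun S _ => ?_
  rw [sum_comm]
  exact sum_congr rfl fun T _ => hcount S T

lemma sum_link_lapTok_le (φ : KSet (Fin n) (k + 1) → ℝ) :
    ∑ v, (lapTok n k G *ᵥ link φ v) ⬝ᵥ link φ v ≤
      k * ((lapTok n (k + 1) G *ᵥ φ) ⬝ᵥ φ) + (k + 1) * k * (φ ⬝ᵥ φ) := by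
  have hunion := (tokenGraph n k G).adjSum_union_le (fun _ _ => card_union_of_adj)
    (f := fun s => extendByZero φ s ^ 2) fun s => sq_nonneg _
  have hnorm : ∑ U : KSet (Fin n) (k + 1), extendByZero φ U.1 ^ 2 = φ ⬝ᵥ φ := by
    simp [dotProduct, sq]
  simp only [lapTok, SimpleGraph.lapMatrix_mulVec_dotProduct_self, ← sum_div,
    SimpleGraph.sum_adjSum]
  rw [SimpleGraph.adjSum_congr fun A B h => sum_link_sub_link_sq φ h, SimpleGraph.adjSum_add,
    adjSum_sum_insert_sub_sq, SimpleGraph.adjSum_mul_left]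
  rw [hnorm] at hunion
  linarith

end TokenGraph

theorem lamMin_token_step_general (n k : ℕ) (G : SimpleGraph (Fin n)) (hk : 2 ≤ k)
    (lam : ℝ) (φ : {s : Finset (Fin n) // s.card = k} → ℝ) (hφ0 : φ ≠ 0)
    (hφ : lapTok n k G *ᵥ φ = lam • φ) (hker : (inclMatrix n k (k - 1))ᵀ *ᵥ φ = 0)
    (μ : ℝ)
    (hμ : μ = sInf {r : ℝ | ∃ ψ : {s : Finset (Fin n) // s.card = k - 1} → ℝ,
      ψ ≠ 0 ∧ (inclMatrix n (k - 1) (k - 2))ᵀ *ᵥ ψ = 0 ∧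
        r = (lapTok n (k - 1) G *ᵥ ψ ⬝ᵥ ψ) / (ψ ⬝ᵥ ψ)}) :
    lam ≥ ((k : ℝ) / ((k : ℝ) - 1)) * μ - k := by
  -- with `k = j + 2`, the indices `k - 1` and `k - 2` are definitionally `j + 1` and `j`
  obtain ⟨j, rfl⟩ : ∃ j, k = j + 2 := ⟨k - 2, by omega⟩
  replace hker : (inclMatrix n (j + 2) (j + 1))ᵀ *ᵥ φ = 0 := hker
  have hrayleigh (v : Fin n) :
      μ * (link φ v ⬝ᵥ link φ v) ≤ (lapTok n (j + 1) G *ᵥ link φ v) ⬝ᵥ link φ v := by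
    rw [hμ]
    refine sInf_mul_dotProduct_le (SimpleGraph.posSemidef_lapMatrix ℝ _) ?_
    show (inclMatrix n (j + 1) j)ᵀ *ᵥ link φ v = 0
    rw [inclMatrix_transpose_mulVec_link, hker, link_zero]
  have hφφ : 0 < φ ⬝ᵥ φ := by simpa using dotProduct_star_self_pos_iff.2 hφ0
  have key : μ * ((j + 2) * (φ ⬝ᵥ φ)) ≤
      (j + 1) * (lam * (φ ⬝ᵥ φ)) + (j + 2) * (j + 1) * (φ ⬝ᵥ φ) := by
    calc μ * ((j + 2) * (φ ⬝ᵥ φ)) = ∑ v, μ * (link φ v ⬝ᵥ link φ v) := by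
          rw [← mul_sum, sum_link_dotProduct_self]
          push_cast
          ring
      _ ≤ ∑ v, (lapTok n (j + 1) G *ᵥ link φ v) ⬝ᵥ link φ v :=
          sum_le_sum fun v _ => hrayleigh v
      _ ≤ _ := sum_link_lapTok_le φ
      _ = _ := by rw [hφ, smul_dotProduct, smul_eq_mul]; push_cast; ring
  push_cast
  rw [ge_iff_le, sub_le_iff_le_add, div_mul_eq_mul_div, div_le_iff₀ (by linarith)]
  nlinarith

/-- If `λ` is an eigenvalue of `L_k(G)` with an eigenvector `φ` satisfying
`B_{n,k,k-1}ᵀ φ = 0`, then `λ ≥ (k/(k-1)) μ - k`, where `μ` is the minimum of the Rayleigh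
quotient of `L_{k-1}(G)` over nonzero vectors `ψ` with `B_{n,k-1,k-2}ᵀ ψ = 0`. -/
theorem lamMin_token_step (n k : ℕ) (G : SimpleGraph (Fin n)) (hk : 2 ≤ k) (hkn : k ≤ n / 2)
    (lam : ℝ) (φ : {s : Finset (Fin n) // s.card = k} → ℝ) (hφ0 : φ ≠ 0)
    (hφ : lapTok n k G *ᵥ φ = lam • φ) (hker : (inclMatrix n k (k - 1))ᵀ *ᵥ φ = 0)
    (μ : ℝ)
    (hμ : μ = sInf {r : ℝ | ∃ ψ : {s : Finset (Fin n) // s.card = k - 1} → ℝ,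
      ψ ≠ 0 ∧ (inclMatrix n (k - 1) (k - 2))ᵀ *ᵥ ψ = 0 ∧
        r = (lapTok n (k - 1) G *ᵥ ψ ⬝ᵥ ψ) / (ψ ⬝ᵥ ψ)}) :
    lam ≥ ((k : ℝ) / ((k : ℝ) - 1)) * μ - k :=
  lamMin_token_step_general n k G hk lam φ hφ0 hφ hker μ hμ
end

section
/- Let G be a graph on [n] and 1 ≤ k ≤ ⌊n/2⌋. If λ is an eigenvalue of L_k(G) admitting an eigenvector φ with B_{n,k,k−1}ᵀ φ = 0, then λ ≥ k·(λ₂(L(G)) − k + 1), where λ₂(L(G)) is the second smallest eigenvalue of the Laplacian of G. -/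
open Finset Matrix

/-- The second smallest eigenvalue (with multiplicity) of a Hermitian real matrix:
the infimum over pairs of distinct indices of the larger of the two corresponding
eigenvalues. -/
noncomputable def lamSecond {V : Type*} [Fintype V] [DecidableEq V] {M : Matrix V V ℝ}
    (hM : M.IsHermitian) : ℝ :=
  sInf {y : ℝ | ∃ i j : V, i ≠ j ∧ y = max (hM.eigenvalues i) (hM.eigenvalues j)}
/-! For a `(k-1)`-set `S`, the link vector `y_S : w ↦ φ(S ∪ {w})` (zero on `S`) sums to
`(Bᵀφ)(S) = 0`, so it is orthogonal to the constants and `λ₂ ‖y_S‖² ≤ y_Sᵀ L(G) y_S`.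
Edges of `G` inside `Sᶜ` contribute the edges `{S ∪ {u}, S ∪ {v}}` of `F_k(G)`, while the edges
from the `k - 1` vertices of `S` to `w` add at most `(k - 1) φ(S ∪ {w})²` each way.
Summing over `S`, each `k`-set arises from `k` pairs `(S, w)` and each edge of `F_k(G)` from the
single `S = A ∩ B`, so `k λ₂ ‖φ‖² ≤ λ ‖φ‖² + k (k - 1) ‖φ‖²`. -/

section Spectral

variable {V : Type*} [Fintype V]

lemma mul_sum_sq_le_sum_mul_sq {μ c d : V → ℝ} {t : ℝ} (hμ : ∀ i, 0 ≤ μ i)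
    (ht : ∀ i j, i ≠ j → t ≤ max (μ i) (μ j)) (hμd : ∀ i, μ i * d i = 0) (hd : d ≠ 0)
    (hcd : c ⬝ᵥ d = 0) :
    t * ∑ i, c i ^ 2 ≤ ∑ i, μ i * c i ^ 2 := by
  obtain ⟨j, hj⟩ := Function.ne_iff.1 hd
  have hμj : μ j = 0 := (mul_eq_zero.1 (hμd j)).resolve_right hj
  have hle : ∀ i ≠ j, t ≤ μ i := fun i hi => by
    simpa [hμj, max_eq_left (hμ i)] using ht i j hi
  rcases le_or_gt t 0 with ht0 | ht0
  · exact (mul_nonpos_of_nonpos_of_nonneg ht0 (sum_nonneg fun i _ => sq_nonneg _)).trans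
      (sum_nonneg fun i _ => mul_nonneg (hμ i) (sq_nonneg _))
  -- Now `μ i > 0` off `j`, so `d` is supported at `j` and `c ⊥ d` forces `c j = 0`.
  have hdi : ∀ i ≠ j, d i = 0 := fun i hi =>
    (mul_eq_zero.1 (hμd i)).resolve_left (ht0.trans_le (hle i hi)).ne'
  have hcj : c j = 0 := by
    rw [dotProduct, sum_eq_single j (fun i _ hi => by rw [hdi i hi, mul_zero]) (by simp)] at hcd
    exact (mul_eq_zero.1 hcd).resolve_right hj
  rw [mul_sum]
  refine sum_le_sum fun i _ => ?_
  rcases eq_or_ne i j with rfl | hi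
  · simp [hcj]
  · exact mul_le_mul_of_nonneg_right (hle i hi) (sq_nonneg _)

variable [DecidableEq V]

lemma lamSecond_le_max {M : Matrix V V ℝ} (hM : M.IsHermitian) {i j : V} (hij : i ≠ j) :
    lamSecond hM ≤ max (hM.eigenvalues i) (hM.eigenvalues j) := by
  refine csInf_le (Set.Finite.bddBelow ?_) ⟨i, j, hij, rfl⟩
  refine (Set.finite_range fun p : V × V =>
    max (hM.eigenvalues p.1) (hM.eigenvalues p.2)).subset ?_
  rintro _ ⟨i, j, -, rfl⟩
  exact ⟨(i, j), rfl⟩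

lemma dotProduct_star_mulVec_star_mulVec (U : unitaryGroup V ℝ) (x y : V → ℝ) :
    (star (U : Matrix V V ℝ) *ᵥ x) ⬝ᵥ (star (U : Matrix V V ℝ) *ᵥ y) = x ⬝ᵥ y := by
  have h : star (U : Matrix V V ℝ) *ᵥ x = x ᵥ* U := by
    rw [star_eq_conjTranspose, conjTranspose_eq_transpose_of_trivial, mulVec_transpose]
  rw [h, dotProduct_mulVec, vecMul_vecMul, mem_unitaryGroup_iff.1 U.2, vecMul_one]

lemma Matrix.IsHermitian.star_eigenvectorUnitary_mulVec_mulVec {M : Matrix V V ℝ}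
    (hM : M.IsHermitian) (x : V → ℝ) :
    star (hM.eigenvectorUnitary : Matrix V V ℝ) *ᵥ (M *ᵥ x) =
      hM.eigenvalues * (star (hM.eigenvectorUnitary : Matrix V V ℝ) *ᵥ x) := by
  set U : Matrix V V ℝ := ↑hM.eigenvectorUnitary
  have hdiag : star U * M * U = diagonal hM.eigenvalues := by
    simpa [Unitary.conjStarAlgAut_apply] using hM.conjStarAlgAut_star_eigenvectorUnitary
  calc star U *ᵥ (M *ᵥ x) = (star U * M * U * star U) *ᵥ x := by
        rw [mul_assoc _ U, mem_unitaryGroup_iff.1 hM.eigenvectorUnitary.2, mul_one, mulVec_mulVec]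
    _ = _ := by
        rw [hdiag, ← mulVec_mulVec]
        exact funext fun i => mulVec_diagonal _ _ i

lemma Matrix.PosSemidef.lamSecond_mul_dotProduct_le {M : Matrix V V ℝ} (hM : M.PosSemidef)
    {x z : V → ℝ} (hz : z ≠ 0) (hMz : M *ᵥ z = 0) (hxz : x ⬝ᵥ z = 0) :
    lamSecond hM.isHermitian * (x ⬝ᵥ x) ≤ x ⬝ᵥ (M *ᵥ x) := by
  set U := star (hM.isHermitian.eigenvectorUnitary : Matrix V V ℝ)
  have hU : ∀ y w, (U *ᵥ y) ⬝ᵥ (U *ᵥ w) = y ⬝ᵥ w := dotProduct_star_mulVec_star_mulVec _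
  have hdiag : ∀ y, U *ᵥ (M *ᵥ y) = hM.isHermitian.eigenvalues * (U *ᵥ y) :=
    hM.isHermitian.star_eigenvectorUnitary_mulVec_mulVec
  have hμd : ∀ i, hM.isHermitian.eigenvalues i * (U *ᵥ z) i = 0 := fun i => by
    simpa [hMz] using (congrFun (hdiag z) i).symm
  have hd : U *ᵥ z ≠ 0 := fun h =>
    hz (dotProduct_self_eq_zero.1 (by rw [← hU z z, h, zero_dotProduct]))
  calc lamSecond hM.isHermitian * (x ⬝ᵥ x)
        = lamSecond hM.isHermitian * ∑ i, (U *ᵥ x) i ^ 2 := by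
        rw [← hU x x]; simp [dotProduct, sq]
    _ ≤ ∑ i, hM.isHermitian.eigenvalues i * (U *ᵥ x) i ^ 2 :=
        mul_sum_sq_le_sum_mul_sq hM.eigenvalues_nonneg (fun i j => lamSecond_le_max _) hμd hd
          (by rw [hU, hxz])
    _ = x ⬝ᵥ (M *ᵥ x) := by
        rw [← hU x (M *ᵥ x), hdiag]
        exact sum_congr rfl fun i _ => by simp only [Pi.mul_apply]; ring

lemma SimpleGraph.dotProduct_lapMatrix_mulVec (G : SimpleGraph V) [DecidableRel G.Adj]
    (x : V → ℝ) :
    x ⬝ᵥ (G.lapMatrix ℝ *ᵥ x) = (∑ i, ∑ j, if G.Adj i j then (x i - x j) ^ 2 else 0) / 2 := by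
  rw [← toLinearMap₂'_apply', SimpleGraph.lapMatrix_toLinearMap₂']

lemma SimpleGraph.dotProduct_lapMatrix_mulVec_le (G : SimpleGraph V) [DecidableRel G.Adj]
    (S : Finset V) {x : V → ℝ} (hx : ∀ v ∈ S, x v = 0) :
    x ⬝ᵥ (G.lapMatrix ℝ *ᵥ x) ≤
      (∑ u ∈ Sᶜ, ∑ v ∈ Sᶜ, if G.Adj u v then (x u - x v) ^ 2 else 0) / 2 +
        #S * (x ⬝ᵥ x) := by
  set E : V → V → ℝ := fun u v => if G.Adj u v then (x u - x v) ^ 2 else 0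
  have hE : ∀ u v, E u v ≤ (if u ∈ Sᶜ then if v ∈ Sᶜ then E u v else 0 else 0) +
      ((if u ∈ S then x v ^ 2 else 0) + if v ∈ S then x u ^ 2 else 0) := by
    intro u v
    by_cases hu : u ∈ S <;> by_cases hv : v ∈ S <;>
      simp only [E, hu, hv, mem_compl, hx, if_true, if_false, not_true, not_false_iff] <;>
      split_ifs <;> nlinarith [sq_nonneg (x u), sq_nonneg (x v)]
  have hcount : ∑ u, ∑ v, ((if u ∈ S then x v ^ 2 else 0) + if v ∈ S then x u ^ 2 else 0) =
      2 * (#S * (x ⬝ᵥ x)) := by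
    simp only [sq, sum_add_distrib, sum_ite_irrel, sum_const_zero, sum_ite_mem, univ_inter,
      sum_const, nsmul_eq_mul, ← mul_sum, dotProduct]
    ring
  have hinner : ∑ u, ∑ v, (if u ∈ Sᶜ then if v ∈ Sᶜ then E u v else 0 else 0) =
      ∑ u ∈ Sᶜ, ∑ v ∈ Sᶜ, E u v := by
    simp only [← ite_sum_zero, sum_ite_mem, univ_inter]
  have := sum_le_sum fun u (_ : u ∈ univ) => sum_le_sum fun v (_ : v ∈ univ) => hE u v
  simp only [sum_add_distrib] at this hcount
  rw [SimpleGraph.dotProduct_lapMatrix_mulVec]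
  change (∑ u, ∑ v, E u v) / 2 ≤ (∑ u ∈ Sᶜ, ∑ v ∈ Sᶜ, E u v) / 2 + _
  linarith

lemma SimpleGraph.lamSecond_mul_dotProduct_le (G : SimpleGraph V) [DecidableRel G.Adj]
    {x : V → ℝ} (hx : ∑ v, x v = 0) :
    lamSecond (G.posSemidef_lapMatrix ℝ).isHermitian * (x ⬝ᵥ x) ≤ x ⬝ᵥ (G.lapMatrix ℝ *ᵥ x) := by
  cases isEmpty_or_nonempty V
  · simp [dotProduct]
  · refine (G.posSemidef_lapMatrix ℝ).lamSecond_mul_dotProduct_le (z := fun _ => 1)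
      (fun h => one_ne_zero (congrFun h (Classical.arbitrary V)))
      G.lapMatrix_mulVec_const_eq_zero ?_
    simpa [dotProduct] using hx

end Spectral

section Augment

variable {α : Type*} [DecidableEq α] {m : ℕ}

def augment (S : {s : Finset α // s.card = m}) (w : {w // w ∉ S.1}) :
    {s : Finset α // s.card = m + 1} :=
  ⟨insert w.1 S.1, by rw [card_insert_of_notMem w.2, S.2]⟩

def linkVec (φ : {s : Finset α // s.card = m + 1} → ℝ) (S : {s : Finset α // s.card = m}) :
    α → ℝ :=
  fun w => if h : w ∈ S.1 then 0 else φ (augment S ⟨w, h⟩)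

lemma linkVec_of_mem (φ : {s : Finset α // s.card = m + 1} → ℝ)
    (S : {s : Finset α // s.card = m}) {w : α} (hw : w ∈ S.1) : linkVec φ S w = 0 :=
  dif_pos hw

lemma linkVec_coe (φ : {s : Finset α // s.card = m + 1} → ℝ) (S : {s : Finset α // s.card = m})
    (w : {w // w ∉ S.1}) : linkVec φ S w = φ (augment S w) :=
  dif_neg w.2

variable [Fintype α]

lemma card_subset_eq_choose (t : Finset α) :
    #{S : {s : Finset α // s.card = m} | S.1 ⊆ t} = (#t).choose m := by
  rw [← card_powersetCard]
  refine card_nbij Subtype.val (fun S hS => ?_) Subtype.val_injective.injOn fun s hs => ?_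
  · simp only [coe_filter, Set.mem_ofPred_eq] at hS
    exact mem_powersetCard.2 ⟨hS.2, S.2⟩
  · obtain ⟨hst, hs⟩ := mem_powersetCard.1 hs
    exact ⟨⟨s, hs⟩, by simpa using hst, rfl⟩

lemma sum_augment {M : Type*} [AddCommMonoid M] (S : {s : Finset α // s.card = m})
    (g : {s : Finset α // s.card = m + 1} → M) :
    ∑ w, g (augment S w) = ∑ A with S.1 ⊆ A.1, g A := by
  refine sum_nbij (augment S) (fun w _ => ?_) (fun u _ v _ h => ?_) (fun A hA => ?_)
    fun _ _ => rfl
  · simp [augment, subset_insert]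
  · exact Subtype.ext ((insert_inj u.2).1 (congrArg Subtype.val h))
  · simp only [coe_filter, mem_univ, true_and, Set.mem_ofPred_eq] at hA
    obtain ⟨w, hw, hwA⟩ := exists_eq_insert_iff.2 ⟨hA, by rw [S.2, A.2]⟩
    exact ⟨⟨w, hw⟩, by simp, Subtype.ext hwA⟩

lemma sum_sum_augment {M : Type*} [AddCommMonoid M]
    (g : {s : Finset α // s.card = m + 1} → M) :
    ∑ S : {s : Finset α // s.card = m}, ∑ w, g (augment S w) = (m + 1) • ∑ A, g A := by
  simp_rw [sum_augment, smul_sum]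
  rw [sum_comm' (t' := univ) (s' := fun A => {S | S.1 ⊆ A.1}) (by simp)]
  refine sum_congr rfl fun A _ => ?_
  rw [sum_const, card_subset_eq_choose, A.2, Nat.choose_succ_self_right]

lemma sum_sum_sum_augment {M : Type*} [AddCommMonoid M]
    (F : {s : Finset α // s.card = m + 1} → {s : Finset α // s.card = m + 1} → M) :
    ∑ S : {s : Finset α // s.card = m}, ∑ u, ∑ v, F (augment S u) (augment S v) =
      ∑ A, ∑ B, #{S : {s : Finset α // s.card = m} | S.1 ⊆ A.1 ∩ B.1} • F A B := by
  have hS : ∀ S : {s : Finset α // s.card = m}, ∑ u, ∑ v, F (augment S u) (augment S v) =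
      ∑ A with S.1 ⊆ A.1, ∑ B with S.1 ⊆ B.1, F A B := fun S => by
    simp_rw [sum_augment S (F _)]
    exact (sum_augment S fun A => ∑ B with S.1 ⊆ B.1, F A B :)
  rw [sum_congr rfl fun S _ => hS S,
    sum_comm' (t' := univ) (s' := fun A => {S | S.1 ⊆ A.1}) (by simp)]
  refine sum_congr rfl fun A _ => ?_
  rw [sum_comm' (t' := univ) (s' := fun B => {S | S.1 ⊆ A.1 ∩ B.1})
    (by simp [subset_inter_iff])]
  exact sum_congr rfl fun B _ => sum_const _

lemma sum_comp_linkVec (φ : {s : Finset α // s.card = m + 1} → ℝ)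
    (S : {s : Finset α // s.card = m}) {f : ℝ → ℝ} (hf : f 0 = 0) :
    ∑ w, f (linkVec φ S w) = ∑ w : {w // w ∉ S.1}, f (φ (augment S w)) := by
  rw [← Fintype.sum_subtype_add_sum_subtype (· ∈ S.1)]
  simp [linkVec_of_mem φ S, hf, linkVec_coe φ S]

lemma sum_dotProduct_linkVec (φ : {s : Finset α // s.card = m + 1} → ℝ) :
    ∑ S : {s : Finset α // s.card = m}, linkVec φ S ⬝ᵥ linkVec φ S = (m + 1) * (φ ⬝ᵥ φ) := by
  simp only [dotProduct, ← sq]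
  simp_rw [sum_comp_linkVec φ _ (f := (· ^ 2)) (zero_pow two_ne_zero)]
  rw [sum_sum_augment (fun A => φ A ^ 2), nsmul_eq_mul]
  push_cast; ring

end Augment

section TokenGraph

variable {n m : ℕ} {G : SimpleGraph (Fin n)}

lemma tokenGraph_adj_augment (S : {s : Finset (Fin n) // s.card = m}) {u v : {w // w ∉ S.1}}
    (huv : G.Adj u v) : (tokenGraph n (m + 1) G).Adj (augment S u) (augment S v) := by
  have hne : u.1 ≠ v.1 := huv.ne
  have hu := u.2
  have hv := v.2
  rw [tokenGraph, SimpleGraph.fromRel_adj]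
  refine ⟨fun h => ?_, Or.inl ⟨?_, u, v, huv, ?_⟩⟩
  · have : u.1 ∈ (augment S v).1 := h ▸ mem_insert_self _ _
    simp [augment, hne, hu] at this
  · have : (augment S u).1 ∩ (augment S v).1 = S.1 := by
      ext x; simp only [augment, mem_inter, mem_insert]; grind
    rw [this, S.2, Nat.add_sub_cancel]
  · ext x; simp only [augment, mem_symmDiff, mem_insert, mem_singleton]; grind

lemma card_inter_of_tokenGraph_adj {A B : {s : Finset (Fin n) // s.card = m + 1}}
    (h : (tokenGraph n (m + 1) G).Adj A B) : #(A.1 ∩ B.1) = m := by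
  rw [tokenGraph, SimpleGraph.fromRel_adj] at h
  rcases h.2 with ⟨h, -⟩ | ⟨h, -⟩
  · simpa using h
  · rw [inter_comm]; simpa using h

lemma sum_linkVec_eq_mulVec (φ : {s : Finset (Fin n) // s.card = m + 1} → ℝ)
    (S : {s : Finset (Fin n) // s.card = m}) :
    ∑ w, linkVec φ S w = ((inclMatrix n (m + 1) m)ᵀ *ᵥ φ) S := by
  refine (sum_comp_linkVec φ S (f := id) rfl).trans ?_
  simp [sum_augment, mulVec, dotProduct, inclMatrix, sum_filter]

variable [DecidableRel G.Adj]

lemma sum_linkVec_energy_le (φ : {s : Finset (Fin n) // s.card = m + 1} → ℝ) :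
    ∑ S : {s : Finset (Fin n) // s.card = m}, ∑ u ∈ S.1ᶜ, ∑ v ∈ S.1ᶜ,
      (if G.Adj u v then (linkVec φ S u - linkVec φ S v) ^ 2 else 0) ≤
      2 * (φ ⬝ᵥ (lapTok n (m + 1) G *ᵥ φ)) := by
  set F := fun A B => if (tokenGraph n (m + 1) G).Adj A B then (φ A - φ B) ^ 2 else 0
  calc _ ≤ ∑ S : {s : Finset (Fin n) // s.card = m}, ∑ u, ∑ v,
        F (augment S u) (augment S v) := by
        refine sum_le_sum fun S _ => ?_
        rw [sum_subtype (p := (· ∉ S.1)) _ fun _ => mem_compl]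
        refine sum_le_sum fun u _ => ?_
        rw [sum_subtype (p := (· ∉ S.1)) _ fun _ => mem_compl]
        refine sum_le_sum fun v _ => ?_
        simp only [F, linkVec_coe]
        split_ifs with huv htok
        · exact le_rfl
        · exact absurd (tokenGraph_adj_augment S huv) htok
        · positivity
        · exact le_rfl
    _ = ∑ A, ∑ B, F A B := by
        rw [sum_sum_sum_augment F]
        refine sum_congr rfl fun A _ => sum_congr rfl fun B _ => ?_
        by_cases h : (tokenGraph n (m + 1) G).Adj A B
        · rw [card_subset_eq_choose, card_inter_of_tokenGraph_adj h, Nat.choose_self, one_smul]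
        · simp [F, h]
    _ = 2 * (φ ⬝ᵥ (lapTok n (m + 1) G *ᵥ φ)) := by
        rw [lapTok, SimpleGraph.dotProduct_lapMatrix_mulVec]
        ring

end TokenGraph

theorem token_eigenvalue_lower_general (n k : ℕ) (G : SimpleGraph (Fin n)) [DecidableRel G.Adj]
    (hk : 1 ≤ k) (lam : ℝ)
    (φ : {s : Finset (Fin n) // s.card = k} → ℝ) (hφ0 : φ ≠ 0)
    (hφ : lapTok n k G *ᵥ φ = lam • φ)
    (hker : (inclMatrix n k (k - 1))ᵀ *ᵥ φ = 0) :
    lam ≥ (k : ℝ) *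
      (lamSecond (SimpleGraph.posSemidef_lapMatrix ℝ G).isHermitian - (k : ℝ) + 1) := by
  obtain ⟨m, rfl⟩ : ∃ m, k = m + 1 := ⟨k - 1, by omega⟩
  rw [Nat.add_sub_cancel] at hker
  set μ₂ := lamSecond (SimpleGraph.posSemidef_lapMatrix ℝ G).isHermitian
  have hN : 0 < φ ⬝ᵥ φ := by simpa using dotProduct_self_star_pos_iff.2 hφ0
  have hφφ : φ ⬝ᵥ (lapTok n (m + 1) G *ᵥ φ) = lam * (φ ⬝ᵥ φ) := by
    rw [hφ, dotProduct_smul, smul_eq_mul]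
  -- Rayleigh bound for each link, which is orthogonal to constants because `Bᵀ φ = 0`.
  have hlink : ∀ S : {s : Finset (Fin n) // s.card = m},
      μ₂ * (linkVec φ S ⬝ᵥ linkVec φ S) ≤
        (∑ u ∈ S.1ᶜ, ∑ v ∈ S.1ᶜ,
          if G.Adj u v then (linkVec φ S u - linkVec φ S v) ^ 2 else 0) / 2 +
        m * (linkVec φ S ⬝ᵥ linkVec φ S) := fun S => by
    have hsum : ∑ w, linkVec φ S w = 0 := by rw [sum_linkVec_eq_mulVec, hker]; rfl
    have := G.dotProduct_lapMatrix_mulVec_le S.1 fun _ hw => linkVec_of_mem φ S hw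
    rw [S.2] at this
    exact (G.lamSecond_mul_dotProduct_le hsum).trans this
  have htotal := sum_le_sum fun S (_ : S ∈ univ) => hlink S
  rw [← mul_sum, sum_add_distrib, ← sum_div, ← mul_sum, sum_dotProduct_linkVec] at htotal
  have henergy := sum_linkVec_energy_le (G := G) φ
  rw [hφφ] at henergy
  have hkey : μ₂ * (m + 1) * (φ ⬝ᵥ φ) ≤ (lam + m * (m + 1)) * (φ ⬝ᵥ φ) := by linarith
  have := le_of_mul_le_mul_right hkey hN
  push_cast
  linarith

/-- If `λ` is an eigenvalue of `L_k(G)` with an eigenvector `φ` satisfying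
`B_{n,k,k-1}ᵀ φ = 0`, then `λ ≥ k (λ₂(L(G)) - k + 1)`. -/
theorem token_eigenvalue_lower (n k : ℕ) (G : SimpleGraph (Fin n)) [DecidableRel G.Adj]
    (hk : 1 ≤ k) (hkn : k ≤ n / 2) (lam : ℝ)
    (φ : {s : Finset (Fin n) // s.card = k} → ℝ) (hφ0 : φ ≠ 0)
    (hφ : lapTok n k G *ᵥ φ = lam • φ)
    (hker : (inclMatrix n k (k - 1))ᵀ *ᵥ φ = 0) :
    lam ≥ (k : ℝ) *
      (lamSecond (SimpleGraph.posSemidef_lapMatrix ℝ G).isHermitian - (k : ℝ) + 1) :=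
  token_eigenvalue_lower_general n k G hk lam φ hφ0 hφ hker
end

section
/- Let G be a graph on [n] with complement Ḡ, and 1 ≤ k ≤ ⌊n/2⌋. If φ ∈ ℝ^{C(n,k)} satisfies B_{n,k,k−1}ᵀ φ = 0 and is an eigenvector of L_k(G) with eigenvalue λ, then φ is an eigenvector of L_k(Ḡ) with eigenvalue k(n − k + 1) − λ. -/
open Finset Matrix

/-!
The token graphs of `G` and `Ḡ` split the edges of the token graph of the complete graph, so
`L_k(G) + L_k(Ḡ) = L_k(K_n)`. With `B = B_{n,k,k-1}`, the entry `(B Bᵀ)_{στ}` counts the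
`(k-1)`-subsets of `σ ∩ τ`, so `B Bᵀ = k I + A`, where `A` is the adjacency matrix of
`F_k(K_n)`. That graph is `k(n-k)`-regular, hence `L_k(K_n) = k(n-k+1) I - B Bᵀ`, which is
multiplication by `k(n-k+1)` on the kernel of `Bᵀ`.
-/

namespace Finset

variable {α : Type*} [DecidableEq α]

theorem card_symmDiff_add_two_mul_card_inter (s t : Finset α) :
    #(symmDiff s t) + 2 * #(s ∩ t) = #s + #t := by
  rw [symmDiff_eq_sup_sdiff_inf, sup_eq_union, inf_eq_inter,
    card_sdiff_of_subset inter_subset_union]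
  have := card_union_add_card_inter s t
  have := card_le_card (inter_subset_union (s := s) (t := t))
  omega

theorem card_inter_lt_of_card_eq_of_ne {s t : Finset α} (hst : #s = #t) (hne : s ≠ t) :
    #(s ∩ t) < #s := by
  refine (card_le_card inter_subset_left).lt_of_ne fun h => hne ?_
  have hsub : s ⊆ t := inter_eq_left.1 (eq_of_subset_of_card_le inter_subset_left h.ge)
  exact eq_of_subset_of_card_le hsub hst.ge

variable [Fintype α]

theorem card_filter_subset_eq_choose (l : ℕ) (s : Finset α) :
    #{η : {t : Finset α // #t = l} | η.1 ⊆ s} = (#s).choose l := by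
  rw [← card_powersetCard, ← card_map (Function.Embedding.subtype _)]
  congr 1
  ext t
  simp [mem_powersetCard, and_comm]

theorem card_filter_superset_eq {k : ℕ} (η : Finset α) (hk : #η + 1 = k) :
    #{τ : {s : Finset α // #s = k} | η ⊆ τ.1} = Fintype.card α - #η := by
  rw [← card_compl, ← card_image_of_injOn (insert_inj_on' η),
    ← card_map (Function.Embedding.subtype _)]
  congr 1
  ext t
  simp [exists_eq_insert_iff, hk, @eq_comm _ k]

end Finset

namespace SimpleGraph

variable {V : Type*} {G H : SimpleGraph V} {R : Type*}
  [DecidableRel G.Adj] [DecidableRel H.Adj] [DecidableRel (G ⊔ H).Adj]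

theorem adjMatrix_sup_of_disjoint [AddMonoidWithOne R] (h : Disjoint G H) :
    (G ⊔ H).adjMatrix R = G.adjMatrix R + H.adjMatrix R := by
  ext v w
  by_cases hG : G.Adj v w
  · simp [hG, disjoint_left.1 h v w hG]
  · by_cases hH : H.Adj v w <;> simp [hG, hH]

variable [Fintype V]

theorem degree_sup_of_disjoint (h : Disjoint G H) (v : V) :
    (G ⊔ H).degree v = G.degree v + H.degree v := by
  simp only [← card_neighborFinset_eq_degree, neighborFinset_sup_of_disjoint v h,
    Finset.card_disjUnion]

theorem degMatrix_sup_of_disjoint [DecidableEq V] [AddMonoidWithOne R] (h : Disjoint G H) :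
    (G ⊔ H).degMatrix R = G.degMatrix R + H.degMatrix R := by
  simp only [degMatrix, degree_sup_of_disjoint h, Nat.cast_add, Matrix.diagonal_add]

theorem lapMatrix_sup_of_disjoint [DecidableEq V] [AddCommGroupWithOne R] (h : Disjoint G H) :
    (G ⊔ H).lapMatrix R = G.lapMatrix R + H.lapMatrix R := by
  simp only [lapMatrix, degMatrix_sup_of_disjoint h, adjMatrix_sup_of_disjoint h]
  abel

end SimpleGraph

section TokenGraph

variable {n k : ℕ}

theorem tokenGraph_adj_iff_s17 {H : SimpleGraph (Fin n)} {σ τ : {s : Finset (Fin n) // #s = k}} :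
    (tokenGraph n k H).Adj σ τ ↔ ∃ u v, H.Adj u v ∧ symmDiff σ.1 τ.1 = {u, v} := by
  simp only [tokenGraph, SimpleGraph.fromRel_adj]
  constructor
  · rintro ⟨-, ⟨-, h⟩ | ⟨-, u, v, huv, hsd⟩⟩
    · exact h
    · exact ⟨u, v, huv, by rwa [symmDiff_comm]⟩
  · rintro ⟨u, v, huv, hsd⟩
    have hcard := card_symmDiff_add_two_mul_card_inter σ.1 τ.1
    rw [hsd, card_pair huv.ne, σ.2, τ.2] at hcard
    refine ⟨?_, Or.inl ⟨by omega, u, v, huv, hsd⟩⟩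
    rintro rfl
    exact insert_ne_empty _ _ (hsd.symm.trans (symmDiff_self _))

theorem tokenGraph_top_adj_iff {σ τ : {s : Finset (Fin n) // #s = k}} :
    (tokenGraph n k ⊤).Adj σ τ ↔ #(σ.1 ∩ τ.1) + 1 = k := by
  have hcard := card_symmDiff_add_two_mul_card_inter σ.1 τ.1
  rw [σ.2, τ.2] at hcard
  simp only [tokenGraph_adj_iff_s17, SimpleGraph.top_adj, ← card_eq_two]
  omega

theorem tokenGraph_sup (H₁ H₂ : SimpleGraph (Fin n)) :
    tokenGraph n k (H₁ ⊔ H₂) = tokenGraph n k H₁ ⊔ tokenGraph n k H₂ := by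
  ext σ τ
  simp only [SimpleGraph.sup_adj, tokenGraph_adj_iff_s17, or_and_right, exists_or]

theorem disjoint_tokenGraph {H₁ H₂ : SimpleGraph (Fin n)} (h : Disjoint H₁ H₂) :
    Disjoint (tokenGraph n k H₁) (tokenGraph n k H₂) := by
  refine SimpleGraph.disjoint_left.2 fun σ τ h₁ h₂ => ?_
  obtain ⟨u, v, huv, hsd⟩ := tokenGraph_adj_iff_s17.1 h₁
  obtain ⟨u', v', huv', hsd'⟩ := tokenGraph_adj_iff_s17.1 h₂
  have hpair : ({u, v} : Set (Fin n)) = {u', v'} := by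
    rw [← coe_pair, ← coe_pair, ← hsd, ← hsd']
  rcases Set.pair_eq_pair_iff.1 hpair with ⟨rfl, rfl⟩ | ⟨rfl, rfl⟩
  · exact SimpleGraph.disjoint_left.1 h _ _ huv huv'
  · exact SimpleGraph.disjoint_left.1 h _ _ huv huv'.symm

theorem lapTok_add_lapTok_compl (G : SimpleGraph (Fin n)) :
    lapTok n k G + lapTok n k Gᶜ = lapTok n k ⊤ := by
  rw [lapTok, lapTok, lapTok,
    ← SimpleGraph.lapMatrix_sup_of_disjoint (disjoint_tokenGraph disjoint_compl_right)]
  congr 1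
  rw [← tokenGraph_sup, sup_compl_eq_top]

end TokenGraph

section InclusionMatrix

variable {n k : ℕ}

theorem inclMatrix_mul_transpose_apply (l : ℕ) (σ τ : {s : Finset (Fin n) // #s = k}) :
    (inclMatrix n k l * (inclMatrix n k l)ᵀ) σ τ = (#(σ.1 ∩ τ.1)).choose l := by
  simp only [mul_apply, transpose_apply, inclMatrix, ite_zero_mul_ite_zero, mul_one,
    ← subset_inter_iff, sum_boole, card_filter_subset_eq_choose]

theorem inclMatrix_mulVec_one (l : ℕ) : inclMatrix n k l *ᵥ 1 = (k.choose l : ℝ) • 1 := by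
  ext σ
  simp [mulVec, dotProduct, inclMatrix, sum_boole, card_filter_subset_eq_choose, σ.2]

theorem inclMatrix_transpose_mulVec_one {l : ℕ} (hk : l + 1 = k) :
    (inclMatrix n k l)ᵀ *ᵥ 1 = ((n : ℝ) - l) • 1 := by
  ext η
  have hl : l ≤ n := η.2 ▸ η.1.card_le_univ.trans_eq (Fintype.card_fin n)
  simp [mulVec, dotProduct, inclMatrix, sum_boole,
    card_filter_superset_eq η.1 (η.2 ▸ hk), Nat.cast_sub hl, η.2]

end InclusionMatrix

section CompleteTokenGraph

variable {n k : ℕ}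

theorem adjMatrix_tokenGraph_top (hk : 1 ≤ k) :
    (tokenGraph n k ⊤).adjMatrix ℝ =
      inclMatrix n k (k - 1) * (inclMatrix n k (k - 1))ᵀ - (k : ℝ) • 1 := by
  ext σ τ
  rw [Matrix.sub_apply, inclMatrix_mul_transpose_apply, Matrix.smul_apply, one_apply,
    SimpleGraph.adjMatrix_apply]
  simp_rw [tokenGraph_top_adj_iff]
  by_cases hst : σ = τ
  · subst hst
    simp [σ.2, Nat.choose_symm hk]
  · have hlt :=
      card_inter_lt_of_card_eq_of_ne (σ.2.trans τ.2.symm) (Subtype.coe_ne_coe.2 hst)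
    rw [σ.2] at hlt
    by_cases hc : #(σ.1 ∩ τ.1) + 1 = k
    · simp [hst, show #(σ.1 ∩ τ.1) = k - 1 by omega, Nat.sub_add_cancel hk]
    · simp [hc, hst, Nat.choose_eq_zero_of_lt (show #(σ.1 ∩ τ.1) < k - 1 by omega)]

theorem degree_tokenGraph_top (hk : 1 ≤ k) (σ : {s : Finset (Fin n) // #s = k}) :
    ((tokenGraph n k ⊤).degree σ : ℝ) = k * (n - k) := by
  -- `deg σ = (B (Bᵀ 1))_σ - k`, and every `(k-1)`-set lies in `n - k + 1` of the `k`-sets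
  rw [← mul_one ((tokenGraph n k ⊤).degree σ : ℝ),
    ← SimpleGraph.adjMatrix_mulVec_const_apply, Function.const_one, adjMatrix_tokenGraph_top hk,
    sub_mulVec, ← mulVec_mulVec, inclMatrix_transpose_mulVec_one (Nat.sub_add_cancel hk),
    mulVec_smul, inclMatrix_mulVec_one, Nat.choose_symm hk, Nat.choose_one_right, smul_mulVec,
    one_mulVec]
  simp only [Pi.sub_apply, Pi.smul_apply, Pi.one_apply, smul_eq_mul, mul_one, Nat.cast_sub hk,
    Nat.cast_one]
  ring

theorem lapTok_top (hk : 1 ≤ k) :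
    lapTok n k ⊤ =
      ((k : ℝ) * (n - k + 1)) • 1 - inclMatrix n k (k - 1) * (inclMatrix n k (k - 1))ᵀ := by
  have hdeg : (tokenGraph n k ⊤).degMatrix ℝ = ((k : ℝ) * (n - k)) • 1 := by
    ext σ τ
    simp [SimpleGraph.degMatrix, diagonal_apply, one_apply, degree_tokenGraph_top hk]
  rw [lapTok, SimpleGraph.lapMatrix, hdeg, adjMatrix_tokenGraph_top hk]
  module

end CompleteTokenGraph

theorem token_complement_eigenvector_general (n k : ℕ) (G : SimpleGraph (Fin n)) (hk : 1 ≤ k)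
    (lam : ℝ) (φ : {s : Finset (Fin n) // s.card = k} → ℝ)
    (hker : (inclMatrix n k (k - 1))ᵀ *ᵥ φ = 0)
    (hφ : lapTok n k G *ᵥ φ = lam • φ) :
    lapTok n k Gᶜ *ᵥ φ = ((k : ℝ) * ((n : ℝ) - (k : ℝ) + 1) - lam) • φ := by
  have hsplit : lapTok n k Gᶜ = lapTok n k ⊤ - lapTok n k G :=
    eq_sub_of_add_eq' (lapTok_add_lapTok_compl G)
  have htop : lapTok n k ⊤ *ᵥ φ = ((k : ℝ) * (n - k + 1)) • φ := by
    rw [lapTok_top hk, sub_mulVec, smul_mulVec, one_mulVec, ← mulVec_mulVec, hker, mulVec_zero,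
      sub_zero]
  rw [hsplit, sub_mulVec, htop, hφ, sub_smul]

/-- If `φ` with `B_{n,k,k-1}ᵀ φ = 0` is an eigenvector of `L_k(G)` with eigenvalue `λ`, then
`φ` is an eigenvector of `L_k(Ḡ)` with eigenvalue `k(n - k + 1) - λ`. -/
theorem token_complement_eigenvector (n k : ℕ) (G : SimpleGraph (Fin n)) (hk : 1 ≤ k)
    (hkn : k ≤ n / 2) (lam : ℝ) (φ : {s : Finset (Fin n) // s.card = k} → ℝ) (hφ0 : φ ≠ 0)
    (hker : (inclMatrix n k (k - 1))ᵀ *ᵥ φ = 0)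
    (hφ : lapTok n k G *ᵥ φ = lam • φ) :
    lapTok n k Gᶜ *ᵥ φ = ((k : ℝ) * ((n : ℝ) - (k : ℝ) + 1) - lam) • φ :=
  token_complement_eigenvector_general n k G hk lam φ hker hφ
end
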